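/- Let n ≥ 1, ω > 0, λ ∈ ℝ, and let v : I × ℝⁿ → ℂ be a smooth solution of i∂ₜv + (1/2)Δv = λ|v|^{4/n} v on an open interval I ∋ 0. Define u(t,x) = cosh(ωt)^{−n/2} exp(i ω|x|² tanh(ωt)/2) v(tanh(ωt)/ω, x/cosh(ωt)) for t with tanh(ωt)/ω ∈ I. Then u is a smooth solution of i∂ₜu + (1/2)Δu = −ω²(|x|²/2) u + λ|u|^{4/n} u, and u(0,·) = v(0,·). -/

import Mathlib

open Complex

/-- The Laplacian of `f : ℝⁿ → ℂ`, as a sum of second partial derivatives. -/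
noncomputable def lap (n : ℕ) (f : EuclideanSpace ℝ (Fin n) → ℂ)
    (x : EuclideanSpace ℝ (Fin n)) : ℂ :=
  ∑ j : Fin n, fderiv ℝ (fun y => fderiv ℝ f y (EuclideanSpace.single j 1)) x
    (EuclideanSpace.single j 1)

/-- The lens transform of `v` for the repulsive harmonic potential:
`u(t,x) = cosh(ωt)^{-n/2} e^{iω|x|² tanh(ωt)/2} v(tanh(ωt)/ω, x/cosh(ωt))`. -/
noncomputable def lensRep (n : ℕ) (ω : ℝ) (v : ℝ → EuclideanSpace ℝ (Fin n) → ℂ)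
    (t : ℝ) (x : EuclideanSpace ℝ (Fin n)) : ℂ :=
  ((Real.cosh (ω * t)) ^ (-((n : ℝ) / 2)) : ℝ)
    * Complex.exp (I * (ω * ‖x‖ ^ 2 * Real.tanh (ω * t) / 2 : ℝ))
    * v (Real.tanh (ω * t) / ω) ((Real.cosh (ω * t))⁻¹ • x)

section Aux

variable {n : ℕ}

lemma euclid_decomp (x : EuclideanSpace ℝ (Fin n)) :
    (∑ j : Fin n, x j • EuclideanSpace.single j (1:ℝ)) = x := by
  ext i
  have : (∑ j : Fin n, x j • EuclideanSpace.single j (1:ℝ)) i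
      = ∑ j : Fin n, (x j • EuclideanSpace.single j (1:ℝ)) i := by
    simp only [WithLp.ofLp_sum, Finset.sum_apply]
  rw [this]
  simp [EuclideanSpace.single_apply]

lemma clm_eval (L : EuclideanSpace ℝ (Fin n) →L[ℝ] ℂ) (x : EuclideanSpace ℝ (Fin n)) :
    L x = ∑ j : Fin n, ((x j : ℝ) : ℂ) * L (EuclideanSpace.single j (1:ℝ)) := by
  conv_lhs => rw [← euclid_decomp x]
  rw [map_sum]
  exact Finset.sum_congr rfl fun j _ => by rw [map_smul]; exact Complex.real_smul

lemma norm_sq_eq (x : EuclideanSpace ℝ (Fin n)) :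
    (‖x‖^2 : ℝ) = ∑ j : Fin n, (x j)^2 := by
  rw [EuclideanSpace.norm_eq, Real.sq_sqrt (by positivity)]
  simp [sq_abs]

-- derivative of the gaussian-phase factor
lemma hasFDerivAt_P (a : ℂ) (b : ℝ) (x : EuclideanSpace ℝ (Fin n)) :
    HasFDerivAt (fun y : EuclideanSpace ℝ (Fin n) => a * Complex.exp (I * ((b * ‖y‖^2 : ℝ) : ℂ)))
      ((a * Complex.exp (I * ((b * ‖x‖^2 : ℝ) : ℂ))) •
        (I • (Complex.ofRealCLM.comp (b • (2 • innerSL ℝ x))))) x := by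
  have h1 : HasFDerivAt (fun y : EuclideanSpace ℝ (Fin n) => ‖y‖^2) (2 • innerSL ℝ x) x :=
    (hasStrictFDerivAt_norm_sq x).hasFDerivAt
  have h2 : HasFDerivAt (fun y : EuclideanSpace ℝ (Fin n) => (b * ‖y‖^2 : ℝ))
      (b • (2 • innerSL ℝ x)) x := h1.const_mul b
  have h3 : HasFDerivAt (fun y : EuclideanSpace ℝ (Fin n) => ((b * ‖y‖^2 : ℝ) : ℂ))
      (Complex.ofRealCLM.comp (b • (2 • innerSL ℝ x))) x :=
    Complex.ofRealCLM.hasFDerivAt.comp x h2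
  have h4 := (h3.const_mul I).cexp
  have h5 := h4.const_mul a
  refine h5.congr_fderiv (Eq.symm ?_)
  rw [smul_smul, smul_smul, smul_smul]

lemma pd_P_mul (a : ℂ) (b : ℝ) (g : EuclideanSpace ℝ (Fin n) → ℂ)
    (x : EuclideanSpace ℝ (Fin n)) (hg : DifferentiableAt ℝ g x) (j : Fin n) :
    fderiv ℝ (fun y => a * Complex.exp (I * ((b * ‖y‖^2 : ℝ) : ℂ)) * g y) x
        (EuclideanSpace.single j (1:ℝ))
      = a * Complex.exp (I * ((b * ‖x‖^2 : ℝ) : ℂ)) *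
          (I * (2*(b:ℂ)) * ((x j : ℝ) : ℂ) * g x
            + fderiv ℝ g x (EuclideanSpace.single j (1:ℝ))) := by
  have h : HasFDerivAt (fun y => a * Complex.exp (I * ((b * ‖y‖^2 : ℝ) : ℂ)) * g y) _ x :=
    (hasFDerivAt_P a b x).mul hg.hasFDerivAt
  rw [h.fderiv]
  have hinner : (innerSL ℝ x) (EuclideanSpace.single j (1:ℝ)) = x j := by
    simp [EuclideanSpace.inner_single_right]
  simp only [ContinuousLinearMap.add_apply, ContinuousLinearMap.smul_apply,
    ContinuousLinearMap.comp_apply, hinner, Complex.ofRealCLM_apply, smul_eq_mul,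
    Complex.real_smul]
  push_cast
  ring

lemma hasFDerivAt_scale (r : ℝ) (w : EuclideanSpace ℝ (Fin n) → ℂ)
    (hw : Differentiable ℝ w) (x : EuclideanSpace ℝ (Fin n)) :
    HasFDerivAt (fun y : EuclideanSpace ℝ (Fin n) => w (r • y))
      ((fderiv ℝ w (r • x)).comp (r • ContinuousLinearMap.id ℝ (EuclideanSpace ℝ (Fin n)))) x :=
  (hw (r • x)).hasFDerivAt.comp x
    ((r • ContinuousLinearMap.id ℝ (EuclideanSpace ℝ (Fin n))).hasFDerivAt)

lemma pd_scale (r : ℝ) (w : EuclideanSpace ℝ (Fin n) → ℂ)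
    (hw : Differentiable ℝ w) (x : EuclideanSpace ℝ (Fin n)) (j : Fin n) :
    fderiv ℝ (fun y => w (r • y)) x (EuclideanSpace.single j (1:ℝ))
      = ((r:ℝ):ℂ) * fderiv ℝ w (r • x) (EuclideanSpace.single j (1:ℝ)) := by
  rw [(hasFDerivAt_scale r w hw x).fderiv]
  simp only [ContinuousLinearMap.comp_apply, ContinuousLinearMap.smul_apply,
    ContinuousLinearMap.id_apply, map_smul, Complex.real_smul]

lemma diffAt_scale (r : ℝ) (w : EuclideanSpace ℝ (Fin n) → ℂ)
    (hw : Differentiable ℝ w) (x : EuclideanSpace ℝ (Fin n)) :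
    DifferentiableAt ℝ (fun y => w (r • y)) x :=
  (hasFDerivAt_scale r w hw x).differentiableAt

lemma pd_Phi (a : ℂ) (b r : ℝ) (w : EuclideanSpace ℝ (Fin n) → ℂ)
    (hw : Differentiable ℝ w) (j : Fin n) (x : EuclideanSpace ℝ (Fin n)) :
    fderiv ℝ (fun y => a * Complex.exp (I * ((b * ‖y‖^2 : ℝ) : ℂ)) * w (r • y)) x
        (EuclideanSpace.single j (1:ℝ))
      = a * Complex.exp (I * ((b * ‖x‖^2 : ℝ) : ℂ)) *
          (I * (2*(b:ℂ)) * ((x j : ℝ) : ℂ) * w (r • x)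
            + ((r:ℝ):ℂ) * fderiv ℝ w (r • x) (EuclideanSpace.single j (1:ℝ))) := by
  rw [pd_P_mul a b _ x (diffAt_scale r w hw x) j, pd_scale r w hw x j]

lemma pd2_Phi (a : ℂ) (b r : ℝ) (w : EuclideanSpace ℝ (Fin n) → ℂ)
    (hw : ContDiff ℝ (⊤ : ℕ∞) w) (j : Fin n) (x : EuclideanSpace ℝ (Fin n)) :
    fderiv ℝ (fun y =>
        fderiv ℝ (fun z => a * Complex.exp (I * ((b * ‖z‖^2 : ℝ) : ℂ)) * w (r • z)) y
          (EuclideanSpace.single j (1:ℝ))) x (EuclideanSpace.single j (1:ℝ))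
      = a * Complex.exp (I * ((b * ‖x‖^2 : ℝ) : ℂ)) *
          ( I * (2*(b:ℂ)) * ((x j : ℝ):ℂ) *
              (I * (2*(b:ℂ)) * ((x j : ℝ):ℂ) * w (r • x)
                + ((r:ℝ):ℂ) * fderiv ℝ w (r • x) (EuclideanSpace.single j (1:ℝ)))
            + ( I * (2*(b:ℂ)) * ((x j : ℝ):ℂ) *
                  (((r:ℝ):ℂ) * fderiv ℝ w (r • x) (EuclideanSpace.single j (1:ℝ)))
                + w (r • x) * (I * (2*(b:ℂ)))
                + ((r:ℝ):ℂ) * (((r:ℝ):ℂ) *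
                    fderiv ℝ (fun z => fderiv ℝ w z (EuclideanSpace.single j (1:ℝ))) (r • x)
                      (EuclideanSpace.single j (1:ℝ))) ) ) := by
  have hwd : Differentiable ℝ w := hw.differentiable (by simp)
  set Dwj : EuclideanSpace ℝ (Fin n) → ℂ :=
    fun z => fderiv ℝ w z (EuclideanSpace.single j (1:ℝ)) with hDwjdef
  have hDwj : ContDiff ℝ (⊤ : ℕ∞) Dwj := (hw.fderiv_right (by simp)).clm_apply contDiff_const
  have hfun : (fun y =>
      fderiv ℝ (fun z => a * Complex.exp (I * ((b * ‖z‖^2 : ℝ) : ℂ)) * w (r • z)) y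
        (EuclideanSpace.single j (1:ℝ)))
      = fun y => a * Complex.exp (I * ((b * ‖y‖^2 : ℝ) : ℂ)) *
          (I * (2*(b:ℂ)) * ((y j : ℝ) : ℂ) * w (r • y)
            + ((r:ℝ):ℂ) * Dwj (r • y)) :=
    funext (pd_Phi a b r w hwd j)
  rw [hfun]
  have hcoord : HasFDerivAt (fun y : EuclideanSpace ℝ (Fin n) => ((y j : ℝ) : ℂ))
      (Complex.ofRealCLM.comp (EuclideanSpace.proj j)) x :=
    (Complex.ofRealCLM.comp (EuclideanSpace.proj (𝕜 := ℝ) j)).hasFDerivAt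
  have hG1 : HasFDerivAt
      (fun y : EuclideanSpace ℝ (Fin n) => I * (2*(b:ℂ)) * ((y j : ℝ) : ℂ) * w (r • y)) _ x :=
    (hcoord.const_mul (I * (2*(b:ℂ)))).mul (hasFDerivAt_scale r w hwd x)
  have hG2 : HasFDerivAt
      (fun y : EuclideanSpace ℝ (Fin n) => ((r:ℝ):ℂ) * Dwj (r • y)) _ x :=
    (hasFDerivAt_scale r Dwj (hDwj.differentiable (by simp)) x).const_mul ((r:ℝ):ℂ)
  have hG : HasFDerivAt (fun y : EuclideanSpace ℝ (Fin n) =>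
      I * (2*(b:ℂ)) * ((y j : ℝ) : ℂ) * w (r • y) + ((r:ℝ):ℂ) * Dwj (r • y)) _ x :=
    hG1.add hG2
  rw [pd_P_mul a b _ x hG.differentiableAt j, hG.fderiv]
  have hproj : (EuclideanSpace.proj (𝕜 := ℝ) j) (EuclideanSpace.single j (1:ℝ)) = 1 := by
    simp
  simp only [ContinuousLinearMap.add_apply, ContinuousLinearMap.smul_apply,
    ContinuousLinearMap.comp_apply, ContinuousLinearMap.id_apply, hproj,
    Complex.ofRealCLM_apply, smul_eq_mul, Complex.real_smul, map_smul, Complex.ofReal_one,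
    mul_one]
  rfl

lemma lap_Phi (a : ℂ) (b r : ℝ) (w : EuclideanSpace ℝ (Fin n) → ℂ)
    (hw : ContDiff ℝ (⊤ : ℕ∞) w) (x : EuclideanSpace ℝ (Fin n)) :
    lap n (fun z => a * Complex.exp (I * ((b * ‖z‖^2 : ℝ) : ℂ)) * w (r • z)) x
      = a * Complex.exp (I * ((b * ‖x‖^2 : ℝ) : ℂ)) *
          ( I * (2*(b:ℂ)) * (I * (2*(b:ℂ))) * ((‖x‖^2 : ℝ) : ℂ) * w (r • x)
            + I * (2*(b:ℂ)) * (n:ℂ) * w (r • x)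
            + 2 * (I * (2*(b:ℂ))) * ((r:ℝ):ℂ) * (fderiv ℝ w (r • x) x)
            + ((r:ℝ):ℂ) * ((r:ℝ):ℂ) * lap n w (r • x) ) := by
  have hdec : (fderiv ℝ w (r • x)) x
      = ∑ j : Fin n, ((x j : ℝ):ℂ) * fderiv ℝ w (r • x) (EuclideanSpace.single j (1:ℝ)) :=
    clm_eval _ x
  have hns : ((‖x‖^2 : ℝ):ℂ) = ∑ j : Fin n, ((x j : ℝ):ℂ)^2 := by
    rw [norm_sq_eq x]; push_cast; ring
  have hcard : ((n:ℂ)) = ∑ _j : Fin n, (1:ℂ) := by simp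
  simp only [lap]
  rw [Finset.sum_congr rfl fun j _ => pd2_Phi a b r w hw j x, ← Finset.mul_sum]
  congr 1
  rw [hdec, hns, hcard]
  simp only [Finset.mul_sum, Finset.sum_mul]
  rw [← Finset.sum_add_distrib, ← Finset.sum_add_distrib, ← Finset.sum_add_distrib]
  exact Finset.sum_congr rfl fun j _ => by ring

end Aux

/-- The lens transform (5.3): if `v` solves the `L²`-critical NLS
`i∂ₜv + (1/2)Δv = λ|v|^{4/n}v` on `I × ℝⁿ`, then
`u(t,x) = cosh(ωt)^{-n/2} e^{iω|x|²tanh(ωt)/2} v(tanh(ωt)/ω, x/cosh(ωt))`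
is a smooth solution of `i∂ₜu + (1/2)Δu = -ω²(|x|²/2)u + λ|u|^{4/n}u`,
with `u(0,·) = v(0,·)`. -/
theorem lens_transform_repulsive (n : ℕ) (hn : 1 ≤ n) (ω lam : ℝ) (hω : 0 < ω)
    (I' : Set ℝ) (hI : IsOpen I') (hI0 : (0:ℝ) ∈ I') (hIconn : I'.OrdConnected)
    (v : ℝ → EuclideanSpace ℝ (Fin n) → ℂ)
    (hv : ContDiffOn ℝ (⊤ : ℕ∞) (fun p : ℝ × EuclideanSpace ℝ (Fin n) => v p.1 p.2)
      (I' ×ˢ Set.univ))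
    (hveq : ∀ t ∈ I', ∀ x,
      I * deriv (fun s => v s x) t + (1/2) * lap n (v t) x
        = lam * ((‖v t x‖) ^ ((4:ℝ) / n) : ℝ) * v t x) :
    (ContDiffOn ℝ (⊤ : ℕ∞)
        (fun p : ℝ × EuclideanSpace ℝ (Fin n) => lensRep n ω v p.1 p.2)
        {p : ℝ × EuclideanSpace ℝ (Fin n) | Real.tanh (ω * p.1) / ω ∈ I'})
      ∧ (∀ t, Real.tanh (ω * t) / ω ∈ I' → ∀ x,
          I * deriv (fun s => lensRep n ω v s x) t
              + (1/2) * lap n (lensRep n ω v t) x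
            = -(ω ^ 2) * (‖x‖ ^ 2 / 2 : ℝ) * lensRep n ω v t x
              + lam * ((‖lensRep n ω v t x‖) ^ ((4:ℝ) / n) : ℝ)
                  * lensRep n ω v t x)
      ∧ ∀ x, lensRep n ω v 0 x = v 0 x := by
  have hω0 : ω ≠ 0 := hω.ne'
  have hopen : IsOpen (I' ×ˢ (Set.univ : Set (EuclideanSpace ℝ (Fin n)))) :=
    hI.prod isOpen_univ
  have htanhCD : ContDiff ℝ (⊤ : ℕ∞) Real.tanh := by
    rw [show Real.tanh = fun x => Real.sinh x / Real.cosh x from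
      funext Real.tanh_eq_sinh_div_cosh]
    exact Real.contDiff_sinh.div Real.contDiff_cosh fun x => (Real.cosh_pos x).ne'
  refine ⟨?_, ?_, ?_⟩
  · -- smoothness
    have hcω : ContDiff ℝ (⊤ : ℕ∞) (fun p : ℝ × EuclideanSpace ℝ (Fin n) => Real.cosh (ω * p.1)) :=
      Real.contDiff_cosh.comp (contDiff_const.mul contDiff_fst)
    have hg : ContDiff ℝ (⊤ : ℕ∞) (fun p : ℝ × EuclideanSpace ℝ (Fin n) =>
        ((Real.tanh (ω * p.1) / ω : ℝ),
          ((Real.cosh (ω * p.1))⁻¹ • p.2 : EuclideanSpace ℝ (Fin n)))) :=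
      ((htanhCD.comp (contDiff_const.mul contDiff_fst)).div_const ω).prodMk
        ((hcω.inv fun p => (Real.cosh_pos _).ne').smul contDiff_snd)
    have hVg : ContDiffOn ℝ (⊤ : ℕ∞) (fun p : ℝ × EuclideanSpace ℝ (Fin n) =>
        v (Real.tanh (ω * p.1) / ω) ((Real.cosh (ω * p.1))⁻¹ • p.2))
        {p : ℝ × EuclideanSpace ℝ (Fin n) | Real.tanh (ω * p.1) / ω ∈ I'} :=
      ContDiffOn.comp hv hg.contDiffOn (fun p hp => ⟨hp, trivial⟩)
    have hf1 : ContDiff ℝ (⊤ : ℕ∞) (fun p : ℝ × EuclideanSpace ℝ (Fin n) =>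
        (((Real.cosh (ω * p.1)) ^ (-((n:ℝ)/2)) : ℝ) : ℂ)) :=
      Complex.ofRealCLM.contDiff.comp (contDiff_iff_contDiffAt.2 fun p =>
        hcω.contDiffAt.rpow_const_of_ne ((Real.cosh_pos _).ne'))
    have hf2 : ContDiff ℝ (⊤ : ℕ∞) (fun p : ℝ × EuclideanSpace ℝ (Fin n) =>
        Complex.exp (I * ((ω * ‖p.2‖^2 * Real.tanh (ω * p.1) / 2 : ℝ) : ℂ))) :=
      Complex.contDiff_exp.comp (contDiff_const.mul (Complex.ofRealCLM.contDiff.comp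
        (((contDiff_const.mul ((contDiff_norm_sq ℝ).comp contDiff_snd)).mul
          (htanhCD.comp (contDiff_const.mul contDiff_fst))).div_const 2)))
    exact ((hf1.mul hf2).contDiffOn.mul hVg)
  · -- the PDE
    intro t ht x
    have hc0 : Real.cosh (ω * t) ≠ 0 := (Real.cosh_pos _).ne'
    have hcpos : (0:ℝ) < Real.cosh (ω * t) := Real.cosh_pos _
    have hsc : Real.sinh (ω * t) = Real.tanh (ω * t) * Real.cosh (ω * t) := by
      rw [Real.tanh_eq_sinh_div_cosh]; field_simp
    have hn0 : (n:ℝ) ≠ 0 := Nat.cast_ne_zero.2 (by omega)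
    -- one-variable derivatives
    have hlin : HasDerivAt (fun t' : ℝ => ω * t') ω t := by
      simpa using (hasDerivAt_id t).const_mul ω
    have hcosh : HasDerivAt (fun t' => Real.cosh (ω * t')) (Real.sinh (ω * t) * ω) t := by
      exact (Real.hasDerivAt_cosh (ω * t)).comp t hlin
    have hsinh : HasDerivAt (fun t' => Real.sinh (ω * t')) (Real.cosh (ω * t) * ω) t := by
      exact (Real.hasDerivAt_sinh (ω * t)).comp t hlin
    have htanh : HasDerivAt (fun t' => Real.tanh (ω * t')) (ω / Real.cosh (ω * t)^2) t := by
      have h := hsinh.div hcosh hc0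
      rw [show ((fun t' => Real.sinh (ω * t')) / (fun t' => Real.cosh (ω * t')))
          = fun t' => Real.tanh (ω * t') from
        funext fun s => (Real.tanh_eq_sinh_div_cosh _).symm] at h
      refine h.congr_deriv (Eq.symm ?_)
      have h1 := Real.cosh_sq_sub_sinh_sq (ω * t)
      field_simp
      linear_combination (-1:ℝ) * h1
    have hτ : HasDerivAt (fun t' => Real.tanh (ω * t') / ω) ((Real.cosh (ω * t)^2)⁻¹) t := by
      have h := htanh.div_const ω
      refine h.congr_deriv (Eq.symm ?_)
      field_simp
    have hr : HasDerivAt (fun t' => (Real.cosh (ω * t'))⁻¹)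
        (-(ω * Real.tanh (ω * t)) / Real.cosh (ω * t)) t := by
      have h := hcosh.inv hc0
      refine h.congr_deriv (Eq.symm ?_)
      rw [hsc]; field_simp
    have hA : HasDerivAt (fun t' => (Real.cosh (ω * t')) ^ (-((n:ℝ)/2)))
        (-((n:ℝ)/2) * (ω * Real.tanh (ω * t)) * (Real.cosh (ω * t)) ^ (-((n:ℝ)/2))) t := by
      have h := (Real.hasDerivAt_rpow_const (x := Real.cosh (ω * t))
        (p := -((n:ℝ)/2)) (Or.inl hc0)).comp t hcosh
      rw [show ((fun x : ℝ => x ^ (-((n:ℝ)/2))) ∘ fun t' => Real.cosh (ω * t'))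
          = fun t' => (Real.cosh (ω * t')) ^ (-((n:ℝ)/2)) from rfl] at h
      refine h.congr_deriv (Eq.symm ?_)
      rw [Real.rpow_sub hcpos, Real.rpow_one, hsc]
      field_simp
    have hAc := hA.ofReal_comp
    have hψ : HasDerivAt (fun t' => (ω * ‖x‖^2 * Real.tanh (ω * t') / 2 : ℝ))
        (ω * ‖x‖^2 * (ω / Real.cosh (ω * t)^2) / 2) t :=
      (htanh.const_mul (ω * ‖x‖^2)).div_const 2
    have hE := (hψ.ofReal_comp.const_mul I).cexp
    -- the v-composition
    have hvat : ContDiffAt ℝ (⊤ : ℕ∞) (fun p : ℝ × EuclideanSpace ℝ (Fin n) => v p.1 p.2)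
        ((Real.tanh (ω * t) / ω : ℝ), ((Real.cosh (ω * t))⁻¹ • x : EuclideanSpace ℝ (Fin n))) :=
      hv.contDiffAt (hopen.mem_nhds ⟨ht, trivial⟩)
    have hVdf : DifferentiableAt ℝ (fun p : ℝ × EuclideanSpace ℝ (Fin n) => v p.1 p.2)
        ((Real.tanh (ω * t) / ω : ℝ), ((Real.cosh (ω * t))⁻¹ • x : EuclideanSpace ℝ (Fin n))) :=
      hvat.differentiableAt (by simp)
    have hγ : HasDerivAt (fun t' => ((Real.tanh (ω * t') / ω : ℝ),
        ((Real.cosh (ω * t'))⁻¹ • x : EuclideanSpace ℝ (Fin n))))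
        (((Real.cosh (ω * t)^2)⁻¹ : ℝ),
          ((-(ω * Real.tanh (ω * t)) / Real.cosh (ω * t)) • x : EuclideanSpace ℝ (Fin n))) t :=
      hτ.prodMk (hr.smul_const x)
    have hW : HasDerivAt (fun t' => v (Real.tanh (ω * t') / ω) ((Real.cosh (ω * t'))⁻¹ • x))
        (fderiv ℝ (fun p : ℝ × EuclideanSpace ℝ (Fin n) => v p.1 p.2)
          ((Real.tanh (ω * t) / ω : ℝ), ((Real.cosh (ω * t))⁻¹ • x : EuclideanSpace ℝ (Fin n)))
          (((Real.cosh (ω * t)^2)⁻¹ : ℝ),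
            ((-(ω * Real.tanh (ω * t)) / Real.cosh (ω * t)) • x : EuclideanSpace ℝ (Fin n)))) t :=
      by have := hVdf.hasFDerivAt.comp_hasDerivAt t hγ; exact this
    have hu := (hAc.mul hE).mul hW
    have hderiv : deriv (fun s => lensRep n ω v s x) t
        = (((-((n:ℝ)/2) * (ω * Real.tanh (ω * t)) * (Real.cosh (ω * t)) ^ (-((n:ℝ)/2)) : ℝ) : ℂ)
              * Complex.exp (I * ((ω * ‖x‖^2 * Real.tanh (ω * t) / 2 : ℝ) : ℂ))
            + (((Real.cosh (ω * t)) ^ (-((n:ℝ)/2)) : ℝ) : ℂ)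
              * (Complex.exp (I * ((ω * ‖x‖^2 * Real.tanh (ω * t) / 2 : ℝ) : ℂ))
                  * (I * ((ω * ‖x‖^2 * (ω / Real.cosh (ω * t)^2) / 2 : ℝ) : ℂ))))
            * v (Real.tanh (ω * t) / ω) ((Real.cosh (ω * t))⁻¹ • x)
          + (((Real.cosh (ω * t)) ^ (-((n:ℝ)/2)) : ℝ) : ℂ)
              * Complex.exp (I * ((ω * ‖x‖^2 * Real.tanh (ω * t) / 2 : ℝ) : ℂ))
              * (fderiv ℝ (fun p : ℝ × EuclideanSpace ℝ (Fin n) => v p.1 p.2)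
                  ((Real.tanh (ω * t) / ω : ℝ),
                    ((Real.cosh (ω * t))⁻¹ • x : EuclideanSpace ℝ (Fin n)))
                  (((Real.cosh (ω * t)^2)⁻¹ : ℝ),
                    ((-(ω * Real.tanh (ω * t)) / Real.cosh (ω * t)) • x
                      : EuclideanSpace ℝ (Fin n)))) := by
      exact HasDerivAt.deriv hu
    -- smoothness of the spatial slice
    have hwCD : ContDiff ℝ (⊤ : ℕ∞) (v (Real.tanh (ω * t) / ω)) :=
      contDiff_iff_contDiffAt.2 fun y' =>
        (hv.contDiffAt (hopen.mem_nhds (⟨ht, trivial⟩ :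
            ((Real.tanh (ω * t) / ω : ℝ), y') ∈ I' ×ˢ Set.univ))).comp y'
          ((contDiff_const.prodMk contDiff_id).contDiffAt)
    -- the Laplacian of the lens transform
    have hfunx : lensRep n ω v t = fun x' : EuclideanSpace ℝ (Fin n) =>
        (((Real.cosh (ω * t)) ^ (-((n:ℝ)/2)) : ℝ) : ℂ)
          * Complex.exp (I * ((ω * Real.tanh (ω * t) / 2 * ‖x'‖^2 : ℝ) : ℂ))
          * v (Real.tanh (ω * t) / ω) ((Real.cosh (ω * t))⁻¹ • x') := by
      funext x'
      simp only [lensRep]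
      rw [show (ω * ‖x'‖^2 * Real.tanh (ω * t) / 2 : ℝ)
        = (ω * Real.tanh (ω * t) / 2 * ‖x'‖^2 : ℝ) from by ring]
    have hlap : lap n (lensRep n ω v t) x
        = (((Real.cosh (ω * t)) ^ (-((n:ℝ)/2)) : ℝ) : ℂ)
            * Complex.exp (I * ((ω * Real.tanh (ω * t) / 2 * ‖x‖^2 : ℝ) : ℂ)) *
          ( I * (2*((ω * Real.tanh (ω * t) / 2 : ℝ):ℂ)) *
                (I * (2*((ω * Real.tanh (ω * t) / 2 : ℝ):ℂ))) * ((‖x‖^2 : ℝ) : ℂ)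
                * v (Real.tanh (ω * t) / ω) ((Real.cosh (ω * t))⁻¹ • x)
            + I * (2*((ω * Real.tanh (ω * t) / 2 : ℝ):ℂ)) * (n:ℂ)
                * v (Real.tanh (ω * t) / ω) ((Real.cosh (ω * t))⁻¹ • x)
            + 2 * (I * (2*((ω * Real.tanh (ω * t) / 2 : ℝ):ℂ))) * (((Real.cosh (ω * t))⁻¹ : ℝ):ℂ)
                * (fderiv ℝ (v (Real.tanh (ω * t) / ω)) ((Real.cosh (ω * t))⁻¹ • x) x)
            + (((Real.cosh (ω * t))⁻¹ : ℝ):ℂ) * (((Real.cosh (ω * t))⁻¹ : ℝ):ℂ)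
                * lap n (v (Real.tanh (ω * t) / ω)) ((Real.cosh (ω * t))⁻¹ • x) ) := by
      rw [hfunx]
      exact lap_Phi _ _ _ _ hwCD x
    rw [show (ω * Real.tanh (ω * t) / 2 * ‖x‖^2 : ℝ)
      = (ω * ‖x‖^2 * Real.tanh (ω * t) / 2 : ℝ) from by ring] at hlap
    -- splitting the space-time derivative
    have hTv : HasDerivAt (fun σ => v σ ((Real.cosh (ω * t))⁻¹ • x))
        (fderiv ℝ (fun p : ℝ × EuclideanSpace ℝ (Fin n) => v p.1 p.2)
          ((Real.tanh (ω * t) / ω : ℝ), ((Real.cosh (ω * t))⁻¹ • x : EuclideanSpace ℝ (Fin n)))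
          ((1:ℝ), (0 : EuclideanSpace ℝ (Fin n)))) (Real.tanh (ω * t) / ω) :=
      by have := hVdf.hasFDerivAt.comp_hasDerivAt (Real.tanh (ω * t) / ω)
          ((hasDerivAt_id (Real.tanh (ω * t) / ω)).prodMk
            (hasDerivAt_const (Real.tanh (ω * t) / ω) ((Real.cosh (ω * t))⁻¹ • x))); exact this
    have hwyF : HasFDerivAt (v (Real.tanh (ω * t) / ω))
        ((fderiv ℝ (fun p : ℝ × EuclideanSpace ℝ (Fin n) => v p.1 p.2)
          ((Real.tanh (ω * t) / ω : ℝ),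
            ((Real.cosh (ω * t))⁻¹ • x : EuclideanSpace ℝ (Fin n)))).comp
          ((0 : EuclideanSpace ℝ (Fin n) →L[ℝ] ℝ).prod
            (ContinuousLinearMap.id ℝ (EuclideanSpace ℝ (Fin n)))))
        ((Real.cosh (ω * t))⁻¹ • x) :=
      hVdf.hasFDerivAt.comp _ ((hasFDerivAt_const _ _).prodMk (hasFDerivAt_id _))
    have hP0x : fderiv ℝ (v (Real.tanh (ω * t) / ω)) ((Real.cosh (ω * t))⁻¹ • x) x
        = fderiv ℝ (fun p : ℝ × EuclideanSpace ℝ (Fin n) => v p.1 p.2)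
          ((Real.tanh (ω * t) / ω : ℝ), ((Real.cosh (ω * t))⁻¹ • x : EuclideanSpace ℝ (Fin n)))
          ((0:ℝ), x) := by
      rw [hwyF.fderiv]
      rfl
    have hsplit : fderiv ℝ (fun p : ℝ × EuclideanSpace ℝ (Fin n) => v p.1 p.2)
        ((Real.tanh (ω * t) / ω : ℝ), ((Real.cosh (ω * t))⁻¹ • x : EuclideanSpace ℝ (Fin n)))
        (((Real.cosh (ω * t)^2)⁻¹ : ℝ),
          ((-(ω * Real.tanh (ω * t)) / Real.cosh (ω * t)) • x : EuclideanSpace ℝ (Fin n)))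
        = (((Real.cosh (ω * t)^2)⁻¹ : ℝ) : ℂ)
            * fderiv ℝ (fun p : ℝ × EuclideanSpace ℝ (Fin n) => v p.1 p.2)
              ((Real.tanh (ω * t) / ω : ℝ),
                ((Real.cosh (ω * t))⁻¹ • x : EuclideanSpace ℝ (Fin n)))
              ((1:ℝ), (0 : EuclideanSpace ℝ (Fin n)))
          + ((-(ω * Real.tanh (ω * t)) / Real.cosh (ω * t) : ℝ) : ℂ)
            * fderiv ℝ (v (Real.tanh (ω * t) / ω)) ((Real.cosh (ω * t))⁻¹ • x) x := by
      rw [hP0x]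
      have harg : ((((Real.cosh (ω * t))^2)⁻¹ : ℝ),
          ((-(ω * Real.tanh (ω * t)) / Real.cosh (ω * t)) • x : EuclideanSpace ℝ (Fin n)))
          = (((Real.cosh (ω * t))^2)⁻¹ : ℝ) • ((1:ℝ), (0 : EuclideanSpace ℝ (Fin n)))
            + (-(ω * Real.tanh (ω * t)) / Real.cosh (ω * t)) •
                ((0:ℝ), (x : EuclideanSpace ℝ (Fin n))) := by
        simp [Prod.ext_iff]
      rw [harg, map_add, map_smul, map_smul, Complex.real_smul, Complex.real_smul]
    -- the NLS equation for v at the transformed point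
    have hveqC := hveq (Real.tanh (ω * t) / ω) ht ((Real.cosh (ω * t))⁻¹ • x)
    rw [hTv.deriv] at hveqC
    -- the modulus factor
    have hAnn : (0:ℝ) ≤ (Real.cosh (ω * t)) ^ (-((n:ℝ)/2)) := Real.rpow_nonneg hcpos.le _
    have habs1 : ‖lensRep n ω v t x‖
        = (Real.cosh (ω * t)) ^ (-((n:ℝ)/2))
          * ‖v (Real.tanh (ω * t) / ω) ((Real.cosh (ω * t))⁻¹ • x)‖ := by
      have hre : (I * ((ω * ‖x‖^2 * Real.tanh (ω * t) / 2 : ℝ):ℂ)).re = 0 := by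
        simp only [Complex.mul_re, Complex.I_re, Complex.I_im, Complex.ofReal_re,
          Complex.ofReal_im]
        ring
      rw [show lensRep n ω v t x = (((Real.cosh (ω * t)) ^ (-((n:ℝ)/2)) : ℝ) : ℂ)
          * Complex.exp (I * ((ω * ‖x‖^2 * Real.tanh (ω * t) / 2 : ℝ) : ℂ))
          * v (Real.tanh (ω * t) / ω) ((Real.cosh (ω * t))⁻¹ • x) from rfl,
        norm_mul, norm_mul, Complex.norm_real, Complex.norm_exp, hre, Real.exp_zero,
        Real.norm_of_nonneg hAnn, mul_one]
    have habs : (‖lensRep n ω v t x‖ ^ ((4:ℝ)/n) : ℝ)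
        = (Real.cosh (ω * t)^2)⁻¹
          * (‖v (Real.tanh (ω * t) / ω) ((Real.cosh (ω * t))⁻¹ • x)‖ ^ ((4:ℝ)/n)) := by
      rw [habs1, Real.mul_rpow hAnn (norm_nonneg _), ← Real.rpow_mul hcpos.le]
      congr 1
      rw [show (-((n:ℝ)/2) * ((4:ℝ)/n)) = (-2 : ℝ) from by field_simp; ring]
      rw [show ((-2 : ℝ)) = -((2:ℕ):ℝ) from by norm_num, Real.rpow_neg hcpos.le,
        Real.rpow_natCast]
    -- final algebra
    have hI2 : (I:ℂ)^2 = -1 := Complex.I_sq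
    have hcC : ((Real.cosh (ω * t) : ℝ) : ℂ) ≠ 0 := by exact_mod_cast hc0
    have hcCC : Complex.cosh ((ω:ℂ) * (t:ℂ)) ≠ 0 := by
      have h := hcC; push_cast at h; exact h
    have h2C : ((Real.cosh (ω * t) : ℝ) : ℂ)^2 * (1 - ((Real.tanh (ω * t) : ℝ) : ℂ)^2) = 1 := by
      have h1 := Real.cosh_sq_sub_sinh_sq (ω * t)
      rw [hsc] at h1
      exact_mod_cast (by linear_combination h1 :
        (Real.cosh (ω * t)^2 : ℝ) * (1 - Real.tanh (ω * t)^2) = 1)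
    have h2CC : (Complex.cosh ((ω:ℂ)*(t:ℂ)))^2 * (1 - (Complex.tanh ((ω:ℂ)*(t:ℂ)))^2) = 1 := by
      push_cast at h2C; exact h2C
    have hinv : ((Complex.cosh ((ω:ℂ)*(t:ℂ)))^2)⁻¹ = 1 - (Complex.tanh ((ω:ℂ)*(t:ℂ)))^2 := by
      have hT1 : (1:ℂ) - (Complex.tanh ((ω:ℂ)*(t:ℂ)))^2 ≠ 0 := by
        intro hzero
        rw [hzero, mul_zero] at h2CC
        exact one_ne_zero h2CC.symm
      field_simp
      linear_combination (-1 : ℂ) * h2CC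
    rw [hderiv, hlap, hsplit, habs,
      show lensRep n ω v t x = (((Real.cosh (ω * t)) ^ (-((n:ℝ)/2)) : ℝ) : ℂ)
        * Complex.exp (I * ((ω * ‖x‖^2 * Real.tanh (ω * t) / 2 : ℝ) : ℂ))
        * v (Real.tanh (ω * t) / ω) ((Real.cosh (ω * t))⁻¹ • x) from rfl]
    rw [show ((-((n:ℝ)/2) * (ω * Real.tanh (ω * t)) * Real.cosh (ω * t) ^ (-((n:ℝ)/2)) : ℝ) : ℂ)
        = ((-((n:ℝ)/2) * (ω * Real.tanh (ω * t)) : ℝ) : ℂ)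
          * ((Real.cosh (ω * t) ^ (-((n:ℝ)/2)) : ℝ) : ℂ) from by push_cast; ring]
    revert hveqC
    generalize Complex.exp (I * ((ω * ‖x‖^2 * Real.tanh (ω * t) / 2 : ℝ) : ℂ)) = EE
    generalize (((Real.cosh (ω * t)) ^ (-((n:ℝ)/2)) : ℝ) : ℂ) = AA
    generalize v (Real.tanh (ω * t) / ω) ((Real.cosh (ω * t))⁻¹ • x) = W
    generalize fderiv ℝ (fun p : ℝ × EuclideanSpace ℝ (Fin n) => v p.1 p.2)
      ((Real.tanh (ω * t) / ω : ℝ), ((Real.cosh (ω * t))⁻¹ • x : EuclideanSpace ℝ (Fin n)))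
      ((1:ℝ), (0 : EuclideanSpace ℝ (Fin n))) = TP
    generalize fderiv ℝ (v (Real.tanh (ω * t) / ω)) ((Real.cosh (ω * t))⁻¹ • x) x = SX
    generalize lap n (v (Real.tanh (ω * t) / ω)) ((Real.cosh (ω * t))⁻¹ • x) = LW
    generalize (‖v (Real.tanh (ω * t) / ω) ((Real.cosh (ω * t))⁻¹ • x)‖
      ^ ((4:ℝ)/n) : ℝ) = M4
    intro hveqC
    push_cast
    linear_combination (AA * EE * ((Complex.cosh ((ω:ℂ)*(t:ℂ)))^2)⁻¹) * hveqC
      + ((ω:ℂ)^2 * ((‖x‖:ℝ):ℂ)^2/2 * AA * EE * W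
          * (((Complex.cosh ((ω:ℂ)*(t:ℂ)))^2)⁻¹ + (Complex.tanh ((ω:ℂ)*(t:ℂ)))^2)) * hI2
      - ((ω:ℂ)^2 * ((‖x‖:ℝ):ℂ)^2/2 * AA * EE * W) * hinv
  · intro x
    simp [lensRep]
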